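/- arXiv:2605.24629 — 5 statements merged into one kernel-verified Lean document; each statement's English description precedes it below -/
import Mathlib

section
/- Rigidity of factorization: Let P, P̃ ∈ ℝ_{≥0}^{n×m} be column-stochastic matrices (each column sums to 1) and B, B̃ ∈ ℝ_{≥0}^{m×n} matrices all of whose rows are nonzero. If P·Diag(S)·B = P̃·Diag(S)·B̃ for all S ∈ ℝ^m, then P = P̃ and B = B̃. -/
open Matrix

/-- Rigidity of the factorization `P · Diag(S) · B`: column-stochastic nonnegative `P, P̃`
and matrices `B, B̃` with nonzero rows generating the same infection operator for all `S`
must coincide. -/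
theorem rigidity_of_factorization {n m : ℕ}
    (P Pt : Matrix (Fin n) (Fin m) ℝ) (B Bt : Matrix (Fin m) (Fin n) ℝ)
    (hP : ∀ i j, 0 ≤ P i j) (hPt : ∀ i j, 0 ≤ Pt i j)
    (hB : ∀ i j, 0 ≤ B i j) (hBt : ∀ i j, 0 ≤ Bt i j)
    (hPcol : ∀ j, ∑ i, P i j = 1) (hPtcol : ∀ j, ∑ i, Pt i j = 1)
    (hBrow : ∀ i, (fun j => B i j) ≠ 0) (hBtrow : ∀ i, (fun j => Bt i j) ≠ 0)
    (h : ∀ S : Fin m → ℝ, P * Matrix.diagonal S * B = Pt * Matrix.diagonal S * Bt) :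
    P = Pt ∧ B = Bt := by
  have key : ∀ (k : Fin m) (i : Fin n) (j : Fin n),
      P i k * B k j = Pt i k * Bt k j := by
    intro k i j
    have h' := h (Pi.single k 1)
    have h2 := congrFun (congrFun h' i) j
    simpa [Matrix.mul_apply, Matrix.diagonal_apply, Pi.single_apply,
      ite_mul, mul_ite, Finset.sum_ite_eq, Finset.sum_ite_eq',
      mul_comm, mul_left_comm, mul_assoc] using h2
  have hBeq : B = Bt := by
    ext k j
    have h1 : ∑ i, P i k * B k j = ∑ i, Pt i k * Bt k j :=
      Finset.sum_congr rfl fun i _ => key k i j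
    rw [← Finset.sum_mul, ← Finset.sum_mul, hPcol, hPtcol, one_mul, one_mul] at h1
    exact h1
  refine ⟨?_, hBeq⟩
  ext i k
  obtain ⟨j, hj⟩ := Function.ne_iff.mp (hBrow k)
  have := key k i j
  rw [← hBeq] at this
  exact mul_right_cancel₀ (by simpa using hj) this
end

section
/- With A Metzler Hurwitz and P, B nonnegative, if 0 ≤ S ≤ S₀ componentwise and ρ(B(-A)^{-1}P·Diag(S₀)) < 1, then ρ(B(-A)^{-1}P·Diag(S)) < 1, and consequently the only nonnegative solution of 0 = AI + P·Diag(S)BI is I = 0. -/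
open Matrix

/-- A matrix is Metzler if its off-diagonal entries are nonnegative. -/
def IsMetzler {n : ℕ} (A : Matrix (Fin n) (Fin n) ℝ) : Prop :=
  ∀ i j, i ≠ j → 0 ≤ A i j

/-- A matrix is Hurwitz if all its (complex) eigenvalues have negative real part. -/
def IsHurwitz {n : ℕ} (A : Matrix (Fin n) (Fin n) ℝ) : Prop :=
  ∀ μ ∈ spectrum ℂ (A.map (algebraMap ℝ ℂ)), μ.re < 0

/-- The spectral radius of a real matrix: the supremum of the moduli of its complex
eigenvalues. -/
noncomputable def specRad {n : ℕ} (M : Matrix (Fin n) (Fin n) ℝ) : ℝ :=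
  sSup {r : ℝ | ∃ μ ∈ spectrum ℂ (M.map (algebraMap ℝ ℂ)), r = ‖μ‖}

/-!
For a nonnegative matrix `M`, Gelfand's formula `ρ(M) = lim ‖Mᵏ‖^(1/k)` with the row-sum norm,
which is monotone on nonnegative matrices, makes `ρ` monotone; and `ρ(M) < 1` makes the Neumann
series `∑ Mᵏ = (1 - M)⁻¹` converge, so that `(1 - M)⁻¹ ≥ 0`.
If `A` is Metzler and Hurwitz, then for small `h > 0` the matrix `1 + h A` is nonnegative and its
eigenvalues `1 + h μ` lie in the open unit disc, so `(-A)⁻¹ = h (1 - (1 + h A))⁻¹ ≥ 0`.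
Hence `B (-A)⁻¹ P Diag(S) ≤ B (-A)⁻¹ P Diag(S₀)` entrywise and both are nonnegative, which gives the
spectral radius bound. Finally, a solution `I` of `0 = A I + P Diag(S) B I` makes `B I` a fixed
vector of `B (-A)⁻¹ P Diag(S)`; as `1` is not an eigenvalue, `B I = 0`, so `A I = 0` and `I = 0`.
-/

open Filter Topology
open scoped NNReal ENNReal

section Entrywise

variable {ι κ ο α : Type*} [Fintype ι] [Semiring α] [PartialOrder α] [IsOrderedRing α]

theorem Matrix.mul_apply_nonneg {M : Matrix κ ι α} {N : Matrix ι ο α} (hM : ∀ i j, 0 ≤ M i j)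
    (hN : ∀ i j, 0 ≤ N i j) (i : κ) (j : ο) : 0 ≤ (M * N) i j :=
  Finset.sum_nonneg fun l _ => mul_nonneg (hM i l) (hN l j)

theorem Matrix.pow_apply_le_pow_apply [DecidableEq ι] {M N : Matrix ι ι α}
    (hM : ∀ i j, 0 ≤ M i j) (hMN : ∀ i j, M i j ≤ N i j) (k : ℕ) (i j : ι) :
    (M ^ k) i j ≤ (N ^ k) i j := by
  induction k generalizing j with
  | zero => rfl
  | succ k ih =>
    rw [pow_succ, pow_succ, mul_apply, mul_apply]
    exact Finset.sum_le_sum fun l _ =>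
      mul_le_mul (ih l) (hMN l j) (hM l j) ((pow_apply_nonneg hM k i l).trans (ih l))

end Entrywise

theorem summable_norm_pow_of_spectralRadius_lt_one {A : Type*} [NormedRing A]
    [NormedAlgebra ℂ A] [CompleteSpace A] {a : A} (ha : spectralRadius ℂ a < 1) :
    Summable fun k => ‖a ^ k‖ := by
  obtain ⟨r, hρr, hr1⟩ := ENNReal.lt_iff_exists_nnreal_btwn.mp ha
  refine .of_norm_bounded_eventually_nat (g := fun k => (r : ℝ) ^ k)
    (summable_geometric_of_lt_one r.coe_nonneg (mod_cast hr1)) ?_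
  filter_upwards [(spectrum.pow_nnnorm_pow_one_div_tendsto_nhds_spectralRadius a).eventually
    (gt_mem_nhds hρr), eventually_gt_atTop 0] with k hk hk0
  rw [one_div, ENNReal.rpow_inv_lt_iff (by positivity), ENNReal.rpow_natCast] at hk
  rw [norm_norm]
  exact_mod_cast hk.le

theorem Complex.eventually_norm_one_add_mul_lt_one {μ : ℂ} (hμ : μ.re < 0) :
    ∀ᶠ h : ℝ in 𝓝[>] 0, ‖1 + h * μ‖ < 1 := by
  have hsmall : ∀ᶠ h : ℝ in 𝓝[>] 0, h * normSq μ < -2 * μ.re :=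
    nhdsWithin_le_nhds <| ((continuous_id.mul continuous_const).tendsto' 0 0 (zero_mul _)).eventually
      (gt_mem_nhds (by linarith))
  filter_upwards [hsmall, self_mem_nhdsWithin] with h hh (hpos : 0 < h)
  rw [normSq_apply] at hh
  -- `‖1 + h μ‖² = 1 + h (2 re μ + h ‖μ‖²)`
  rw [← sq_lt_one_iff₀ (norm_nonneg _), Complex.sq_norm, normSq_apply]
  simp only [add_re, one_re, mul_re, ofReal_re, ofReal_im, add_im, one_im, mul_im]
  nlinarith

section LinftyOpNorm

attribute [local instance] Matrix.linftyOpNormedAddCommGroup Matrix.linftyOpNormedRing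
  Matrix.linftyOpNormedAlgebra

variable {ι : Type*} [Fintype ι] [DecidableEq ι]

theorem Matrix.linfty_opNNNorm_mono {M N : Matrix ι ι ℝ} (hM : ∀ i j, 0 ≤ M i j)
    (hMN : ∀ i j, M i j ≤ N i j) : ‖M‖₊ ≤ ‖N‖₊ := by
  simp only [linfty_opNNNorm_def]
  refine Finset.sup_mono_fun fun i _ => Finset.sum_le_sum fun j _ => ?_
  rw [← NNReal.coe_le_coe, coe_nnnorm, coe_nnnorm, Real.norm_of_nonneg (hM i j),
    Real.norm_of_nonneg ((hM i j).trans (hMN i j))]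
  exact hMN i j

theorem Matrix.linfty_opNNNorm_map_algebraMap (M : Matrix ι ι ℝ) :
    ‖M.map (algebraMap ℝ ℂ)‖₊ = ‖M‖₊ := by
  simp [linfty_opNNNorm_def]

theorem Matrix.map_algebraMap_pow (M : Matrix ι ι ℝ) (k : ℕ) :
    M.map (algebraMap ℝ ℂ) ^ k = (M ^ k).map (algebraMap ℝ ℂ) :=
  (map_pow (algebraMap ℝ ℂ).mapMatrix M k).symm

theorem Matrix.spectralRadius_map_algebraMap_mono {M N : Matrix ι ι ℝ} (hM : ∀ i j, 0 ≤ M i j)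
    (hMN : ∀ i j, M i j ≤ N i j) :
    spectralRadius ℂ (M.map (algebraMap ℝ ℂ)) ≤ spectralRadius ℂ (N.map (algebraMap ℝ ℂ)) := by
  refine le_of_tendsto_of_tendsto'
    (spectrum.pow_nnnorm_pow_one_div_tendsto_nhds_spectralRadius _)
    (spectrum.pow_nnnorm_pow_one_div_tendsto_nhds_spectralRadius _) fun k => ?_
  gcongr
  simp only [map_algebraMap_pow, linfty_opNNNorm_map_algebraMap]
  exact linfty_opNNNorm_mono (pow_apply_nonneg hM k) (pow_apply_le_pow_apply hM hMN k)

theorem Matrix.inv_one_sub_apply_nonneg {M : Matrix ι ι ℝ} (hM : ∀ i j, 0 ≤ M i j)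
    (hρ : spectralRadius ℂ (M.map (algebraMap ℝ ℂ)) < 1) (i j : ι) : 0 ≤ (1 - M)⁻¹ i j := by
  have hsum : Summable fun k => M ^ k := by
    refine (summable_norm_pow_of_spectralRadius_lt_one hρ).of_norm_bounded fun k => ?_
    rw [map_algebraMap_pow, ← coe_nnnorm, ← coe_nnnorm, linfty_opNNNorm_map_algebraMap]
  rw [inv_eq_right_inv hsum.one_sub_mul_tsum_pow]
  exact (hsum.hasSum.map (entryAddMonoidHom ℝ i j) (continuous_id.matrix_elem i j)).nonneg
    fun k => pow_apply_nonneg hM k i j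

theorem specRad_nonneg {n : ℕ} (M : Matrix (Fin n) (Fin n) ℝ) : 0 ≤ specRad M :=
  Real.sSup_nonneg fun _ ⟨μ, _, hr⟩ => hr ▸ norm_nonneg μ

theorem spectralRadius_map_algebraMap_eq_ofReal_specRad {n : ℕ} (M : Matrix (Fin n) (Fin n) ℝ) :
    spectralRadius ℂ (M.map (algebraMap ℝ ℂ)) = ENNReal.ofReal (specRad M) := by
  rcases (spectrum ℂ (M.map (algebraMap ℝ ℂ))).eq_empty_or_nonempty with hσ | hσ
  · rw [specRad, spectralRadius, hσ]
    simp
  obtain ⟨z, hz, hzρ⟩ := spectrum.exists_nnnorm_eq_spectralRadius_of_nonempty hσ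
  have hsup : specRad M = ‖z‖ := by
    refine IsGreatest.csSup_eq ⟨⟨z, hz, rfl⟩, ?_⟩
    rintro r ⟨μ, hμ, rfl⟩
    have : (‖μ‖₊ : ℝ≥0∞) ≤ ‖z‖₊ := hzρ ▸ le_iSup₂ (α := ℝ≥0∞) μ hμ
    exact_mod_cast this
  rw [← hzρ, hsup, ofReal_norm, enorm_eq_nnnorm]

theorem norm_le_specRad {n : ℕ} {M : Matrix (Fin n) (Fin n) ℝ} {μ : ℂ}
    (hμ : μ ∈ spectrum ℂ (M.map (algebraMap ℝ ℂ))) : ‖μ‖ ≤ specRad M := by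
  rw [← ENNReal.ofReal_le_ofReal_iff (specRad_nonneg M),
    ← spectralRadius_map_algebraMap_eq_ofReal_specRad, ofReal_norm]
  exact le_iSup₂ (α := ℝ≥0∞) μ hμ

theorem specRad_mono {n : ℕ} {M N : Matrix (Fin n) (Fin n) ℝ} (hM : ∀ i j, 0 ≤ M i j)
    (hMN : ∀ i j, M i j ≤ N i j) : specRad M ≤ specRad N := by
  rw [← ENNReal.ofReal_le_ofReal_iff (specRad_nonneg N),
    ← spectralRadius_map_algebraMap_eq_ofReal_specRad,
    ← spectralRadius_map_algebraMap_eq_ofReal_specRad]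
  exact spectralRadius_map_algebraMap_mono hM hMN

theorem Matrix.ofReal_mem_spectrum_map_iff {M : Matrix ι ι ℝ} {r : ℝ} :
    (r : ℂ) ∈ spectrum ℂ (M.map (algebraMap ℝ ℂ)) ↔ r ∈ spectrum ℝ M := by
  rw [mem_spectrum_iff_isRoot_charpoly, mem_spectrum_iff_isRoot_charpoly, charpoly_map]
  exact Polynomial.isRoot_map_iff (algebraMap ℝ ℂ).injective

theorem Matrix.mem_spectrum_of_mulVec_eq_smul {K : Type*} [Field K] {M : Matrix ι ι K}
    {x : ι → K} {r : K} (hx : x ≠ 0) (hMx : M *ᵥ x = r • x) : r ∈ spectrum K M := by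
  rw [spectrum.mem_iff, ← mulVec_injective_iff_isUnit]
  refine fun hinj => hx (hinj ?_)
  rw [sub_mulVec, hMx, mulVec_zero, algebraMap_eq_diagonal, Pi.algebraMap_def,
    Algebra.algebraMap_self, RingHom.id_apply]
  simp

theorem Matrix.exists_eq_one_add_mul_of_mem_spectrum_one_add_smul {M : Matrix ι ι ℝ} {h : ℝ}
    (hh : h ≠ 0) {ν : ℂ} (hν : ν ∈ spectrum ℂ ((1 + h • M).map (algebraMap ℝ ℂ))) :
    ∃ μ ∈ spectrum ℂ (M.map (algebraMap ℝ ℂ)), ν = 1 + h * μ := by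
  have hmap : (1 + h • M).map (algebraMap ℝ ℂ)
      = algebraMap ℂ _ 1 + Units.mk0 (h : ℂ) (by exact_mod_cast hh) • M.map (algebraMap ℝ ℂ) := by
    ext i j
    by_cases hij : i = j <;> simp [hij, Units.smul_def]
  rw [hmap, ← spectrum.singleton_add_eq, spectrum.unit_smul_eq_smul] at hν
  obtain ⟨_, rfl, _, ⟨μ, hμ, rfl⟩, rfl⟩ := hν
  exact ⟨μ, hμ, rfl⟩

section MetzlerHurwitz

variable {n : ℕ} {A : Matrix (Fin n) (Fin n) ℝ}

theorem IsHurwitz.isUnit (hH : IsHurwitz A) : IsUnit A := by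
  have h0 : (0 : ℝ) ∉ spectrum ℝ A := fun h0 =>
    (hH _ (ofReal_mem_spectrum_map_iff.mpr h0)).false
  rwa [spectrum.zero_mem_iff, not_not] at h0

theorem IsMetzler.eventually_one_add_smul_nonneg (hM : IsMetzler A) :
    ∀ᶠ h : ℝ in 𝓝[>] 0, ∀ i j, 0 ≤ (1 + h • A) i j := by
  simp only [eventually_all]
  intro i j
  by_cases hij : i = j
  · subst hij
    have hc : Continuous fun h : ℝ => 1 + h * A i i := by fun_prop
    filter_upwards [nhdsWithin_le_nhds ((hc.tendsto' 0 1 (by simp)).eventually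
      (lt_mem_nhds one_pos))] with h hh
    simpa using hh.le
  · filter_upwards [self_mem_nhdsWithin] with h (hpos : 0 < h)
    simpa [one_apply_ne hij] using mul_nonneg hpos.le (hM i j hij)

theorem IsMetzler.exists_one_add_smul_nonneg_spectralRadius_lt_one (hM : IsMetzler A)
    (hH : IsHurwitz A) :
    ∃ h : ℝ, 0 < h ∧ (∀ i j, 0 ≤ (1 + h • A) i j) ∧
      spectralRadius ℂ ((1 + h • A).map (algebraMap ℝ ℂ)) < 1 := by
  have hσ : ∀ᶠ h : ℝ in 𝓝[>] 0, ∀ μ ∈ spectrum ℂ (A.map (algebraMap ℝ ℂ)), ‖1 + h * μ‖ < 1 :=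
    (finite_spectrum _).eventually_all.mpr fun μ hμ =>
      Complex.eventually_norm_one_add_mul_lt_one (hH μ hμ)
  obtain ⟨h, hpos, hN, hρ⟩ :=
    (eventually_mem_nhdsWithin.and (hM.eventually_one_add_smul_nonneg.and hσ)).exists
  refine ⟨h, hpos, hN, ?_⟩
  rcases subsingleton_or_nontrivial (Matrix (Fin n) (Fin n) ℂ) with _ | _
  · rw [spectrum.SpectralRadius.of_subsingleton]
    exact zero_lt_one
  · have := spectrum.spectralRadius_lt_of_forall_lt (r := 1)
      ((1 + h • A).map (algebraMap ℝ ℂ)) fun ν hν => by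
      obtain ⟨μ, hμ, rfl⟩ := exists_eq_one_add_mul_of_mem_spectrum_one_add_smul (ne_of_gt hpos) hν
      exact_mod_cast hρ μ hμ
    exact_mod_cast this

theorem IsMetzler.neg_inv_apply_nonneg (hM : IsMetzler A) (hH : IsHurwitz A) (i j : Fin n) :
    0 ≤ (-A)⁻¹ i j := by
  obtain ⟨h, hpos, hN, hρ⟩ := hM.exists_one_add_smul_nonneg_spectralRadius_lt_one hH
  have hdet : IsUnit (-A).det := (isUnit_iff_isUnit_det _).mp hH.isUnit.neg
  have hinv : (1 - (1 + h • A))⁻¹ = h⁻¹ • (-A)⁻¹ := by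
    rw [sub_add_cancel_left, ← smul_neg]
    exact inv_eq_right_inv (by
      rw [smul_mul_smul_comm, mul_inv_cancel₀ hpos.ne', one_smul, mul_nonsing_inv _ hdet])
  have := inv_one_sub_apply_nonneg hN hρ i j
  rw [hinv, Matrix.smul_apply, smul_eq_mul] at this
  exact (mul_nonneg_iff_of_pos_left (inv_pos.mpr hpos)).mp this

end MetzlerHurwitz

end LinftyOpNorm

theorem eq_zero_of_mulVec_add_mulVec_eq_zero_of_specRad_lt_one {n m : ℕ}
    {A : Matrix (Fin n) (Fin n) ℝ} (hA : IsUnit A) {P : Matrix (Fin n) (Fin m) ℝ}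
    {B : Matrix (Fin m) (Fin n) ℝ} {D : Matrix (Fin m) (Fin m) ℝ}
    (hρ : specRad (B * (-A)⁻¹ * P * D) < 1) {I : Fin n → ℝ}
    (hI : A *ᵥ I + (P * D * B) *ᵥ I = 0) : I = 0 := by
  have hAinv : (-A)⁻¹ * (-A) = 1 := nonsing_inv_mul _ ((isUnit_iff_isUnit_det _).mp hA.neg)
  have hQ : (P * D * B) *ᵥ I = (-A) *ᵥ I := by
    rw [neg_mulVec, ← eq_neg_of_add_eq_zero_right hI]
  have hfix : (B * (-A)⁻¹ * P * D) *ᵥ (B *ᵥ I) = (1 : ℝ) • B *ᵥ I :=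
    calc (B * (-A)⁻¹ * P * D) *ᵥ (B *ᵥ I) = B *ᵥ ((-A)⁻¹ *ᵥ ((P * D * B) *ᵥ I)) := by
          simp only [mulVec_mulVec, Matrix.mul_assoc]
      _ = (1 : ℝ) • B *ᵥ I := by rw [hQ, mulVec_mulVec I, hAinv, one_mulVec, one_smul]
  have hBI : B *ᵥ I = 0 := by
    by_contra hBI
    have := norm_le_specRad
      (ofReal_mem_spectrum_map_iff.mpr (mem_spectrum_of_mulVec_eq_smul hBI hfix))
    rw [Complex.ofReal_one, norm_one] at this
    linarith
  have hAI : A *ᵥ I = A *ᵥ 0 := by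
    rw [mulVec_zero, ← hI, ← mulVec_mulVec, hBI, mulVec_zero, add_zero]
  exact mulVec_injective_iff_isUnit.mpr hA hAI

/-- Below threshold: if `0 ≤ S ≤ S₀` and `ρ(B(-A)⁻¹P Diag(S₀)) < 1`, then
`ρ(B(-A)⁻¹P Diag(S)) < 1`, and the only nonnegative solution of
`0 = A I + P Diag(S) B I` is `I = 0`. -/
theorem subthreshold_only_trivial_solution {n m : ℕ}
    (A : Matrix (Fin n) (Fin n) ℝ) (hM : IsMetzler A) (hH : IsHurwitz A)
    (P : Matrix (Fin n) (Fin m) ℝ) (B : Matrix (Fin m) (Fin n) ℝ)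
    (hP : ∀ i j, 0 ≤ P i j) (hB : ∀ i j, 0 ≤ B i j)
    (S S₀ : Fin m → ℝ) (hS : ∀ i, 0 ≤ S i) (hSS₀ : ∀ i, S i ≤ S₀ i)
    (hρ : specRad (B * (-A)⁻¹ * P * Matrix.diagonal S₀) < 1) :
    specRad (B * (-A)⁻¹ * P * Matrix.diagonal S) < 1 ∧
      ∀ I : Fin n → ℝ, (∀ i, 0 ≤ I i) →
        0 = A.mulVec I + (P * Matrix.diagonal S * B).mulVec I → I = 0 := by
  have hG : ∀ i j, 0 ≤ (B * (-A)⁻¹ * P) i j :=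
    mul_apply_nonneg (mul_apply_nonneg hB (hM.neg_inv_apply_nonneg hH)) hP
  have hρS : specRad (B * (-A)⁻¹ * P * diagonal S) < 1 := by
    refine (specRad_mono (fun i j => ?_) (fun i j => ?_)).trans_lt hρ <;>
      simp only [mul_diagonal]
    · exact mul_nonneg (hG i j) (hS j)
    · exact mul_le_mul_of_nonneg_left (hSS₀ j) (hG i j)
  exact ⟨hρS, fun I _ hI =>
    eq_zero_of_mulVec_add_mulVec_eq_zero_of_specRad_lt_one hH.isUnit hρS hI.symm⟩
end

section
/- Determinant law det(J_EE) = -det(J_DFE): for the one-susceptible rank-one model S' = Λ - μ_S S - S β⃗I, I' = αSβ⃗I + AI with A Metzler Hurwitz, R₀ = (Λ/μ_S)β⃗(-A)^{-1}α > 1, endemic equilibrium (S̄, Ī) satisfying Λ = μ_S S̄ + S̄β⃗Ī and AĪ = -αS̄β⃗Ī with q* := β⃗Ī = μ_S(R₀-1), the Jacobian J_EE = [[-μ_S - q*, -S̄β⃗],[q*α, A + S̄αβ⃗]] satisfies det(J_EE) = μ_S·det(A)·(1 - R₀) = -det(J_DFE). -/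
/-!
Adding `α i` times the susceptible row to the `i`-th infected row cancels the rank-one term
`s • vecMulVec α β` of the infected block, leaving a matrix bordered around `A` itself; the Schur
complement of the invertible (Hurwitz) block `A` then gives `det A * (a + s (a + c) β A⁻¹ α)`.
Both Jacobians have this shape, and `S₀ β A⁻¹ α = -R₀`, `S̄ R₀ = S₀` evaluate the two
determinants to `μ_S det A (1 - R₀)` and its negative.
-/

open Matrix

namespace Matrix

variable {m n R : Type*} [Fintype m] [Fintype n] [DecidableEq m] [DecidableEq n] [CommRing R]

theorem det_fromBlocks_add_mul_row (P : Matrix m m R) (Q : Matrix m n R) (S : Matrix n m R)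
    (T : Matrix n n R) (C : Matrix n m R) :
    (fromBlocks P Q (S + C * P) (T + C * Q)).det = (fromBlocks P Q S T).det := by
  have hfactor :
      fromBlocks P Q (S + C * P) (T + C * Q) = fromBlocks 1 0 C 1 * fromBlocks P Q S T := by
    rw [fromBlocks_multiply]
    simp only [Matrix.one_mul, Matrix.zero_mul, add_zero, add_comm]
  rw [hfactor, det_mul, det_fromBlocks_zero₁₂, det_one, det_one, one_mul, one_mul]

theorem inv_neg_of_isUnit_det {A : Matrix n n R} (hA : IsUnit A.det) : (-A)⁻¹ = -A⁻¹ :=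
  inv_eq_right_inv (by rw [Matrix.neg_mul, Matrix.mul_neg, neg_neg, mul_nonsing_inv A hA])

theorem det_fromBlocks_rankOne_border {A : Matrix n n R} (hA : IsUnit A.det) (a c s : R)
    (α β : n → R) :
    (fromBlocks (of fun (_ : Fin 1) (_ : Fin 1) => a) (of fun _ j => -(s * β j))
      (of fun i _ => c * α i) (A + s • vecMulVec α β)).det =
      A.det * (a + s * (a + c) * (β ⬝ᵥ A⁻¹ *ᵥ α)) := by
  set P : Matrix (Fin 1) (Fin 1) R := of fun _ _ => a
  set Q : Matrix (Fin 1) n R := of fun _ j => -(s * β j)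
  set C : Matrix n (Fin 1) R := of fun i _ => α i
  have hS : (of fun i (_ : Fin 1) => c * α i) + C * P = of fun i _ => (a + c) * α i := by
    ext i j; simp [C, P, mul_apply]; ring
  have hT : A + s • vecMulVec α β + C * Q = A := by
    ext i j; simp [C, Q, mul_apply, vecMulVec_apply, mul_left_comm]
  have : Invertible A := invertibleOfIsUnitDet A hA
  rw [← det_fromBlocks_add_mul_row _ _ _ _ C, hS, hT, det_fromBlocks₂₂, det_fin_one,
    invOf_eq_nonsing_inv]
  simp only [sub_apply, of_apply, mul_apply, neg_mul, Finset.sum_neg_distrib, Finset.sum_mul,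
    sub_neg_eq_add, dotProduct, mulVec, Finset.mul_sum, P, Q]
  rw [Finset.sum_comm]
  congr 2
  exact Finset.sum_congr rfl fun _ _ => Finset.sum_congr rfl fun _ _ => by ring

end Matrix

theorem IsHurwitz.isUnit_det {n : ℕ} {A : Matrix (Fin n) (Fin n) ℝ} (hA : IsHurwitz A) :
    IsUnit A.det := by
  refine isUnit_iff_ne_zero.mpr fun h0 => ?_
  have hsing : ¬IsUnit (A.map (algebraMap ℝ ℂ)) := by
    rw [Matrix.isUnit_iff_isUnit_det, ← RingHom.mapMatrix_apply, ← RingHom.map_det, h0, map_zero]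
    exact not_isUnit_zero
  simpa using hA 0 ((spectrum.zero_mem_iff ℂ).mpr hsing)

theorem determinant_law_general {n : ℕ}
    (A : Matrix (Fin n) (Fin n) ℝ) (hH : IsHurwitz A)
    (α : Fin n → ℝ) (β : Fin n → ℝ)
    (μS lam S₀ R₀ : ℝ) (hμ : 0 < μS) (hS₀ : S₀ = lam / μS)
    (hR₀ : R₀ = S₀ * (β ⬝ᵥ (-A)⁻¹.mulVec α)) (hR₀gt : 1 < R₀)
    (Sb : ℝ) (Ib : Fin n → ℝ) (qs : ℝ)
    (hqs : qs = β ⬝ᵥ Ib)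
    (hEE1 : lam = μS * Sb + Sb * (β ⬝ᵥ Ib))
    (hqsval : qs = μS * (R₀ - 1))
    (JDFE JEE : Matrix (Fin 1 ⊕ Fin n) (Fin 1 ⊕ Fin n) ℝ)
    (hJDFE : JDFE = Matrix.fromBlocks
        (Matrix.of fun (_ : Fin 1) (_ : Fin 1) => -μS)
        (Matrix.of fun (_ : Fin 1) (j : Fin n) => -(S₀ * β j))
        (0 : Matrix (Fin n) (Fin 1) ℝ)
        (A + S₀ • Matrix.vecMulVec α β))
    (hJEE : JEE = Matrix.fromBlocks
        (Matrix.of fun (_ : Fin 1) (_ : Fin 1) => -μS - qs)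
        (Matrix.of fun (_ : Fin 1) (j : Fin n) => -(Sb * β j))
        (Matrix.of fun (i : Fin n) (_ : Fin 1) => qs * α i)
        (A + Sb • Matrix.vecMulVec α β)) :
    JEE.det = μS * A.det * (1 - R₀) ∧ JEE.det = -JDFE.det := by
  have hA := hH.isUnit_det
  set t := β ⬝ᵥ A⁻¹ *ᵥ α
  have hS₀t : S₀ * t = -R₀ := by
    rw [hR₀, inv_neg_of_isUnit_det hA, neg_mulVec, dotProduct_neg, mul_neg, neg_neg]
  have hSbR₀ : Sb * R₀ = S₀ := by
    have hS₀μ : S₀ * μS = lam := by rw [hS₀, div_mul_cancel₀ _ hμ.ne']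
    refine mul_right_cancel₀ hμ.ne' ?_
    linear_combination -hEE1 + Sb * hqs - Sb * hqsval - hS₀μ
  have hSbt : Sb * t = -1 :=
    mul_left_cancel₀ (zero_lt_one.trans hR₀gt).ne' (by linear_combination t * hSbR₀ + hS₀t)
  have hEE : JEE.det = A.det * (-μS - qs + Sb * (-μS - qs + qs) * t) := by
    rw [hJEE]
    exact det_fromBlocks_rankOne_border hA _ _ _ α β
  have hDFE : JDFE.det = A.det * (-μS + S₀ * (-μS + 0) * t) := by
    rw [hJDFE, show (0 : Matrix (Fin n) (Fin 1) ℝ) = of fun i _ => 0 * α i by ext; simp]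
    exact det_fromBlocks_rankOne_border hA _ _ _ α β
  constructor
  · linear_combination hEE - A.det * μS * hSbt - A.det * hqsval
  · linear_combination hEE + hDFE - A.det * μS * hSbt - A.det * μS * hS₀t - A.det * hqsval

/-- Determinant law `det(J_EE) = -det(J_DFE)` for the one-susceptible rank-one model:
`det J_EE = μ_S det(A) (1 - R₀) = - det J_DFE`. -/
theorem determinant_law {n : ℕ}
    (A : Matrix (Fin n) (Fin n) ℝ) (hM : IsMetzler A) (hH : IsHurwitz A)
    (α : Fin n → ℝ) (hα : ∀ i, 0 ≤ α i) (hαsum : ∑ i, α i = 1)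
    (β : Fin n → ℝ) (hβ : ∀ i, 0 ≤ β i)
    (μS lam S₀ R₀ : ℝ) (hμ : 0 < μS) (hlam : 0 < lam) (hS₀ : S₀ = lam / μS)
    (hR₀ : R₀ = S₀ * (β ⬝ᵥ (-A)⁻¹.mulVec α)) (hR₀gt : 1 < R₀)
    (Sb : ℝ) (Ib : Fin n → ℝ) (qs : ℝ)
    (hqs : qs = β ⬝ᵥ Ib)
    (hEE1 : lam = μS * Sb + Sb * (β ⬝ᵥ Ib))
    (hEE2 : A.mulVec Ib = -(Sb * (β ⬝ᵥ Ib)) • α)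
    (hqsval : qs = μS * (R₀ - 1))
    (JDFE JEE : Matrix (Fin 1 ⊕ Fin n) (Fin 1 ⊕ Fin n) ℝ)
    (hJDFE : JDFE = Matrix.fromBlocks
        (Matrix.of fun (_ : Fin 1) (_ : Fin 1) => -μS)
        (Matrix.of fun (_ : Fin 1) (j : Fin n) => -(S₀ * β j))
        (0 : Matrix (Fin n) (Fin 1) ℝ)
        (A + S₀ • Matrix.vecMulVec α β))
    (hJEE : JEE = Matrix.fromBlocks
        (Matrix.of fun (_ : Fin 1) (_ : Fin 1) => -μS - qs)
        (Matrix.of fun (_ : Fin 1) (j : Fin n) => -(Sb * β j))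
        (Matrix.of fun (i : Fin n) (_ : Fin 1) => qs * α i)
        (A + Sb • Matrix.vecMulVec α β)) :
    JEE.det = μS * A.det * (1 - R₀) ∧ JEE.det = -JDFE.det :=
  determinant_law_general A hH α β μS lam S₀ R₀ hμ hS₀ hR₀ hR₀gt Sb Ib qs hqs hEE1 hqsval JDFE JEE
    hJDFE hJEE
end

section
/- Computing det(J_EE) reduces to det(J_EE) = -q*·det(A): for the (n+1)×(n+1) matrix M = [[-μ_S - q*, -S̄β⃗],[q*α, A + S̄αβ⃗]], where S̄β⃗(-A)^{-1}α = 1, 𝟙ᵀα = 1, and A invertible, one has det M = -q*·det(A). -/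
open Matrix

/-- Schur-complement computation of the endemic Jacobian determinant:
for `M = [[-μ_S - q*, -S̄β⃗],[q*α, A + S̄αβ⃗]]` with `A` invertible, `𝟙ᵀα = 1`, and the
endemic normalization `S̄ β⃗ (-A)⁻¹ α = 1`, one has `det M = -q* det(A)`. -/
theorem det_jacobian_ee_reduction {n : ℕ}
    (A : Matrix (Fin n) (Fin n) ℝ) (hA : IsUnit A.det)
    (α : Fin n → ℝ) (hαsum : ∑ i, α i = 1)
    (β : Fin n → ℝ)
    (μS qs Sb : ℝ)
    (hnorm : Sb * (β ⬝ᵥ (-A)⁻¹.mulVec α) = 1) :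
    (Matrix.fromBlocks
        (Matrix.of fun (_ : Fin 1) (_ : Fin 1) => -μS - qs)
        (Matrix.of fun (_ : Fin 1) (j : Fin n) => -(Sb * β j))
        (Matrix.of fun (i : Fin n) (_ : Fin 1) => qs * α i)
        (A + Sb • Matrix.vecMulVec α β)).det
      = -qs * A.det := by
  haveI : Invertible A := A.invertibleOfIsUnitDet hA
  have hAneg : (-A)⁻¹ = -A⁻¹ := by
    apply Matrix.inv_eq_right_inv
    simp [Matrix.mul_nonsing_inv A hA]
  have hnorm' : Sb * (β ⬝ᵥ A⁻¹.mulVec α) = -1 := by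
    rw [hAneg] at hnorm
    simp only [Matrix.neg_mulVec, dotProduct_neg, mul_neg] at hnorm
    linarith
  set M : Matrix (Fin 1 ⊕ Fin n) (Fin 1 ⊕ Fin n) ℝ :=
    Matrix.fromBlocks
        (Matrix.of fun (_ : Fin 1) (_ : Fin 1) => -μS - qs)
        (Matrix.of fun (_ : Fin 1) (j : Fin n) => -(Sb * β j))
        (Matrix.of fun (i : Fin n) (_ : Fin 1) => qs * α i)
        (A + Sb • Matrix.vecMulVec α β) with hM
  set E : Matrix (Fin 1 ⊕ Fin n) (Fin 1 ⊕ Fin n) ℝ :=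
    Matrix.fromBlocks 1 0 (Matrix.of fun (i : Fin n) (_ : Fin 1) => α i) 1 with hE
  have hdetE : E.det = 1 := by
    rw [hE, Matrix.det_fromBlocks_zero₁₂]
    simp
  have hmul : E * M = Matrix.fromBlocks
      (Matrix.of fun (_ : Fin 1) (_ : Fin 1) => -μS - qs)
      (Matrix.of fun (_ : Fin 1) (j : Fin n) => -(Sb * β j))
      (Matrix.of fun (i : Fin n) (_ : Fin 1) => -(μS * α i))
      A := by
    rw [hE, hM, Matrix.fromBlocks_multiply]
    ext (i|i) (j|j) <;>
      simp [Matrix.mul_apply, Fin.sum_univ_one, Matrix.vecMulVec_apply] <;> ring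
  have hdet : M.det = -qs * A.det := by
    have h1 : M.det = (E * M).det := by rw [Matrix.det_mul, hdetE, one_mul]
    rw [h1, hmul, Matrix.det_fromBlocks₂₂]
    have hentry : ((Matrix.of fun (_ : Fin 1) (_ : Fin 1) => -μS - qs) -
        (Matrix.of fun (_ : Fin 1) (j : Fin n) => -(Sb * β j)) * A⁻¹ *
        (Matrix.of fun (i : Fin n) (_ : Fin 1) => -(μS * α i))) =
        Matrix.of fun (_ : Fin 1) (_ : Fin 1) => -qs := by
      ext i j
      have : (β ⬝ᵥ A⁻¹.mulVec α) = ∑ k, ∑ l, β k * (A⁻¹ k l * α l) := by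
        simp [dotProduct, Matrix.mulVec, dotProduct, Finset.mul_sum]
      have h2 : Sb * ∑ k, ∑ l, β k * (A⁻¹ k l * α l) = -1 := by rw [← this]; exact hnorm'
      simp only [Matrix.sub_apply, Matrix.mul_apply, Matrix.of_apply]
      have : ∑ l, (∑ k, -(Sb * β k) * A⁻¹ k l) * -(μS * α l)
          = μS * (Sb * ∑ k, ∑ l, β k * (A⁻¹ k l * α l)) := by
        simp_rw [Finset.sum_mul, Finset.mul_sum]
        rw [Finset.sum_comm]
        refine Finset.sum_congr rfl fun k _ => Finset.sum_congr rfl fun l _ => by ring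
      rw [this, h2]
      ring
    rw [Matrix.invOf_eq_nonsing_inv, hentry]
    simp [Matrix.det_fin_one]
    ring
  exact hdet
end

section
/- DFE Lyapunov derivative decomposition (scalar susceptible version, Case P): consider S' = φ(S) - Diag(S)BI, I' = (α SᵀB + A)I with S ∈ ℝ_{>0}^m, φ(S) = -Diag(μ_S)(S - S₀), A Metzler Hurwitz, B ≥ 0, 𝟙ᵀα = 1, R₀ = S₀ᵀB(-A)^{-1}α. Then the function V(S,I) = R₀(𝟙ᵀS - S₀ᵀln S) + S₀ᵀB(-A)^{-1}I satisfies along trajectories V' = -R₀·Σ_j μ_{S,j}(S_j - S₀,j)²/S_j + (R₀ - 1)·S₀ᵀBI. In particular V' ≤ 0 when R₀ ≤ 1. -/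
open Matrix

attribute [local instance] Matrix.linftyOpNormedRing Matrix.linftyOpNormedAlgebra
  Matrix.linftyOpNormedAddCommGroup Matrix.linftyOpNormedSpace

namespace DfeAux
variable {n : ℕ}

lemma mul_entry_nonneg {P Q : Matrix (Fin n) (Fin n) ℝ} (hP : ∀ i j, 0 ≤ P i j)
    (hQ : ∀ i j, 0 ≤ Q i j) : ∀ i j, 0 ≤ (P * Q) i j := fun i j => by
  rw [Matrix.mul_apply]
  exact Finset.sum_nonneg fun k _ => mul_nonneg (hP i k) (hQ k j)

lemma pow_entry_nonneg {P : Matrix (Fin n) (Fin n) ℝ} (hP : ∀ i j, 0 ≤ P i j) :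
    ∀ k, ∀ i j, 0 ≤ (P ^ k) i j := by
  intro k
  induction k with
  | zero => intro i j; simp [Matrix.one_apply]; split <;> simp
  | succ k ih => rw [pow_succ]; exact mul_entry_nonneg ih hP

lemma inv_one_sub_entry_nonneg {X : Matrix (Fin n) (Fin n) ℝ} (hX : ‖X‖ < 1)
    (h : ∀ i j, 0 ≤ X i j) : ∀ i j, 0 ≤ (1 - X)⁻¹ i j := by
  intro i j
  have hs : HasSum (fun k => X ^ k) (Ring.inverse (1 - X)) := hasSum_geom_series_inverse X hX
  have hcont : Continuous (fun M : Matrix (Fin n) (Fin n) ℝ => M i j) :=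
    (continuous_apply j).comp (continuous_apply i)
  have h2 : HasSum (fun k => (X ^ k) i j) ((Ring.inverse (1 - X)) i j) :=
    hs.map (AddMonoidHom.mk' (fun M : Matrix (Fin n) (Fin n) ℝ => M i j)
      (fun _ _ => rfl)) hcont
  rw [Matrix.nonsing_inv_eq_ringInverse]
  exact hasSum_le (fun k => pow_entry_nonneg h k i j) hasSum_zero h2

lemma isUnit_smul_one_sub {A : Matrix (Fin n) (Fin n) ℝ} (hH : IsHurwitz A) {s : ℝ}
    (hs : 0 ≤ s) : IsUnit ((s • (1 : Matrix (Fin n) (Fin n) ℝ)) - A) := by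
  rw [Matrix.isUnit_iff_isUnit_det, isUnit_iff_ne_zero]
  intro hdet
  have hmem : ((s : ℂ) ∈ spectrum ℂ (A.map (algebraMap ℝ ℂ))) := by
    rw [spectrum.mem_iff]
    have heq : (algebraMap ℂ (Matrix (Fin n) (Fin n) ℂ)) (s : ℂ) - A.map (algebraMap ℝ ℂ)
        = ((s • (1 : Matrix (Fin n) (Fin n) ℝ)) - A).map (algebraMap ℝ ℂ) := by
      ext i j
      simp [Matrix.algebraMap_matrix_apply, Matrix.map_apply, Matrix.one_apply]
      split <;> simp
    rw [heq, Matrix.isUnit_iff_isUnit_det]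
    have : ((s • (1 : Matrix (Fin n) (Fin n) ℝ)) - A).map (algebraMap ℝ ℂ)
        = (algebraMap ℝ ℂ).mapMatrix ((s • (1 : Matrix (Fin n) (Fin n) ℝ)) - A) := rfl
    rw [this, ← RingHom.map_det, hdet]
    simp
  have := hH _ hmem
  simp at this
  linarith


lemma step_nonneg {A : Matrix (Fin n) (Fin n) ℝ} (hH : IsHurwitz A) {s t : ℝ}
    (hs : 0 ≤ s) (hst : s ≤ t)
    (hlt : (t - s) * ‖((t • (1 : Matrix (Fin n) (Fin n) ℝ)) - A)⁻¹‖ < 1)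
    (hft : ∀ i j, 0 ≤ ((t • (1 : Matrix (Fin n) (Fin n) ℝ)) - A)⁻¹ i j) :
    ∀ i j, 0 ≤ ((s • (1 : Matrix (Fin n) (Fin n) ℝ)) - A)⁻¹ i j := by
  set M : Matrix (Fin n) (Fin n) ℝ := (t • (1 : Matrix (Fin n) (Fin n) ℝ)) - A with hM
  have hMu : IsUnit M := isUnit_smul_one_sub hH (le_trans hs hst)
  have hMd : IsUnit M.det := (Matrix.isUnit_iff_isUnit_det M).mp hMu
  set X : Matrix (Fin n) (Fin n) ℝ := (t - s) • M⁻¹ with hX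
  have hXnorm : ‖X‖ < 1 := by
    rw [hX, norm_smul, Real.norm_eq_abs, abs_of_nonneg (by linarith)]
    exact hlt
  have hXpos : ∀ i j, 0 ≤ X i j := fun i j =>
    mul_nonneg (by linarith) (hft i j)
  have heq : (s • (1 : Matrix (Fin n) (Fin n) ℝ)) - A = M * (1 - X) := by
    rw [mul_sub, mul_one, hX, mul_smul_comm, Matrix.mul_nonsing_inv M hMd, hM]
    module
  intro i j
  rw [heq, Matrix.mul_inv_rev]
  exact mul_entry_nonneg (inv_one_sub_entry_nonneg hXnorm hXpos) hft i j

lemma neg_inv_entry_nonneg {A : Matrix (Fin n) (Fin n) ℝ} (hMz : IsMetzler A)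
    (hH : IsHurwitz A) : ∀ i j, 0 ≤ (-A)⁻¹ i j := by
  classical
  set f : ℝ → Matrix (Fin n) (Fin n) ℝ :=
    fun s => ((s • (1 : Matrix (Fin n) (Fin n) ℝ)) - A)⁻¹ with hf
  set c : ℝ := (∑ i, |A i i|) + 1 with hc
  have hc1 : 1 ≤ c := by
    have : 0 ≤ ∑ i, |A i i| := Finset.sum_nonneg fun i _ => abs_nonneg _
    linarith
  have hcA : ∀ i, |A i i| ≤ c - 1 := by
    intro i
    have := Finset.single_le_sum (f := fun i => |A i i|) (fun i _ => abs_nonneg _)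
      (Finset.mem_univ i)
    simp [hc]; linarith
  set N : Matrix (Fin n) (Fin n) ℝ := A + c • 1 with hN
  have hNpos : ∀ i j, 0 ≤ N i j := by
    intro i j
    rcases eq_or_ne i j with rfl | hij
    · have := hcA i
      have := abs_le.mp (hcA i)
      simp [hN, Matrix.one_apply]
      linarith [this.1]
    · simp [hN, Matrix.one_apply_ne hij]
      exact hMz i j hij
  set M0 : ℝ := ‖N‖ with hM0
  have hM0nn : 0 ≤ M0 := norm_nonneg _
  -- base case
  have base : ∀ s, M0 ≤ s → ∀ i j, 0 ≤ f s i j := by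
    intro s hsM i j
    have hs0 : 0 ≤ s := le_trans hM0nn hsM
    set r : ℝ := s + c with hr
    have hrpos : 0 < r := by linarith
    set X : Matrix (Fin n) (Fin n) ℝ := r⁻¹ • N with hXd
    have hXpos : ∀ i j, 0 ≤ X i j := fun i j =>
      mul_nonneg (inv_nonneg.mpr hrpos.le) (hNpos i j)
    have hXnorm : ‖X‖ < 1 := by
      rw [hXd, norm_smul, Real.norm_eq_abs, abs_of_nonneg (inv_nonneg.mpr hrpos.le)]
      rw [inv_mul_lt_iff₀ hrpos, mul_one]
      calc ‖N‖ = M0 := rfl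
        _ < r := by linarith
    have heq : (s • (1 : Matrix (Fin n) (Fin n) ℝ)) - A
        = r • ((1 : Matrix (Fin n) (Fin n) ℝ) - X) := by
      rw [smul_sub, hXd, smul_smul, mul_inv_cancel₀ hrpos.ne', one_smul, hN, hr]
      rw [add_smul]
      abel
    have hYu : IsUnit ((1 : Matrix (Fin n) (Fin n) ℝ) - X) :=
      isUnit_one_sub_of_norm_lt_one hXnorm
    have hYd : IsUnit ((1 : Matrix (Fin n) (Fin n) ℝ) - X).det :=
      (Matrix.isUnit_iff_isUnit_det _).mp hYu
    have : f s = (Units.mk0 r hrpos.ne')⁻¹ • ((1 : Matrix (Fin n) (Fin n) ℝ) - X)⁻¹ := by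
      rw [hf]
      simp only [heq]
      rw [show r • ((1 : Matrix (Fin n) (Fin n) ℝ) - X)
          = (Units.mk0 r hrpos.ne') • ((1 : Matrix (Fin n) (Fin n) ℝ) - X) from rfl]
      exact Matrix.inv_smul' (A := ((1 : Matrix (Fin n) (Fin n) ℝ) - X)) (Units.mk0 r hrpos.ne') hYd
    rw [this]
    simp only [Matrix.smul_apply, Units.smul_def]
    refine mul_nonneg ?_ (inv_one_sub_entry_nonneg hXnorm hXpos i j)
    simp [inv_nonneg.mpr hrpos.le]
  -- bound on the compact interval
  have hcontf : ContinuousOn f (Set.Icc 0 (M0 + 1)) := by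
    have hfr : ∀ s ∈ Set.Icc (0:ℝ) (M0 + 1),
        f s = Ring.inverse ((s • (1 : Matrix (Fin n) (Fin n) ℝ)) - A) := by
      intro s _
      exact Matrix.nonsing_inv_eq_ringInverse ((s • (1 : Matrix (Fin n) (Fin n) ℝ)) - A)
    refine ContinuousOn.congr ?_ hfr
    intro s hs
    have hg : Continuous (fun s : ℝ => (s • (1 : Matrix (Fin n) (Fin n) ℝ)) - A) :=
      (continuous_id.smul continuous_const).sub continuous_const
    have hu := isUnit_smul_one_sub hH (n := n) (A := A) (s := s) hs.1
    have h1 : ContinuousAt (Ring.inverse (M₀ := Matrix (Fin n) (Fin n) ℝ))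
        ((s • (1 : Matrix (Fin n) (Fin n) ℝ)) - A) := by
      have := NormedRing.inverse_continuousAt hu.unit
      rwa [hu.unit_spec] at this
    exact (ContinuousAt.comp (x := s) h1 hg.continuousAt).continuousWithinAt
  obtain ⟨C0, hC0⟩ := (isCompact_Icc (a := (0:ℝ)) (b := M0 + 1)).exists_bound_of_continuousOn
    hcontf
  set C : ℝ := max C0 0 with hCdef
  have hC : ∀ s ∈ Set.Icc (0:ℝ) (M0 + 1), ‖f s‖ ≤ C := fun s hs =>
    (hC0 s hs).trans (le_max_left _ _)
  have hCnn : 0 ≤ C := le_max_right _ _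
  set δ : ℝ := (2 * (C + 1))⁻¹ with hδ
  have hδpos : 0 < δ := by positivity
  have hδ1 : δ ≤ 1 := by
    rw [hδ]
    rw [inv_le_one_iff₀]
    right; linarith
  have hδC : δ * C < 1 := by
    rw [hδ, inv_mul_lt_iff₀ (by positivity)]
    nlinarith
  -- downward induction
  have ind : ∀ k : ℕ, ∀ s : ℝ, 0 ≤ s → M0 ≤ s + k * δ → ∀ i j, 0 ≤ f s i j := by
    intro k
    induction k with
    | zero => intro s hs h; simpa using base s (by simpa using h)
    | succ k ih =>
      intro s hs h i j
      by_cases hcase : M0 ≤ s + k * δ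
      · exact ih s hs hcase i j
      · push_neg at hcase
        set t : ℝ := s + δ with ht
        have hts : s ≤ t := by rw [ht]; linarith
        have ht0 : 0 ≤ t := le_trans hs hts
        have htI : t ∈ Set.Icc (0:ℝ) (M0 + 1) := by
          constructor
          · exact ht0
          · have : s < M0 := by
              have : (0:ℝ) ≤ k * δ := by positivity
              linarith
            rw [ht]; linarith
        have hIH : ∀ i j, 0 ≤ f t i j := by
          intro i j
          refine ih t ht0 ?_ i j
          push_cast at h ⊢
          rw [ht]; linarith
        have hlt : (t - s) * ‖f t‖ < 1 := by
          have h1 : t - s = δ := by rw [ht]; ring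
          rw [h1]
          calc δ * ‖f t‖ ≤ δ * C := by
                exact mul_le_mul_of_nonneg_left (hC t htI) hδpos.le
            _ < 1 := hδC
        exact step_nonneg hH hs hts hlt hIH i j
  intro i j
  have h0 : (-A)⁻¹ = f 0 := by rw [hf]; simp
  rw [h0]
  refine ind ⌈M0 / δ⌉₊ 0 le_rfl ?_ i j
  have := Nat.le_ceil (M0 / δ)
  rw [div_le_iff₀ hδpos] at this
  linarith

end DfeAux

/-- DFE Lyapunov derivative decomposition (Case P): along trajectories of
`S' = -Diag(μ_S)(S - S₀) - Diag(S) B I`, `I' = (α SᵀB + A) I`, the derivative of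
`V = R₀(𝟙ᵀS - S₀ᵀ ln S) + S₀ᵀB(-A)⁻¹ I` equals
`-R₀ Σ_j μ_{S,j}(S_j - S₀_j)²/S_j + (R₀ - 1) S₀ᵀ B I`; in particular `V' ≤ 0` when
`R₀ ≤ 1`. -/
theorem dfe_lyapunov_derivative {n m : ℕ}
    (A : Matrix (Fin n) (Fin n) ℝ) (hM : IsMetzler A) (hH : IsHurwitz A)
    (B : Matrix (Fin m) (Fin n) ℝ) (hB : ∀ i j, 0 ≤ B i j)
    (α : Fin n → ℝ) (hα : ∀ i, 0 ≤ α i) (hαsum : ∑ i, α i = 1)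
    (μS S₀ S : Fin m → ℝ) (hμ : ∀ j, 0 < μS j) (hS₀ : ∀ j, 0 < S₀ j) (hS : ∀ j, 0 < S j)
    (I : Fin n → ℝ) (hI : ∀ i, 0 ≤ I i)
    (R₀ : ℝ) (hR₀ : R₀ = S₀ ⬝ᵥ B.mulVec ((-A)⁻¹.mulVec α))
    (Sdot : Fin m → ℝ)
    (hSdot : Sdot = fun j => -(μS j * (S j - S₀ j)) - S j * B.mulVec I j)
    (Idot : Fin n → ℝ)
    (hIdot : Idot = (Matrix.vecMulVec α (Matrix.vecMul S B) + A).mulVec I)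
    (Vdot : ℝ)
    (hVdot : Vdot = R₀ * ((∑ j, Sdot j) - ∑ j, S₀ j * Sdot j / S j)
        + Matrix.vecMul (Matrix.vecMul S₀ B) (-A)⁻¹ ⬝ᵥ Idot) :
    Vdot = -R₀ * (∑ j, μS j * (S j - S₀ j) ^ 2 / S j)
        + (R₀ - 1) * (S₀ ⬝ᵥ B.mulVec I) ∧
      (R₀ ≤ 1 → Vdot ≤ 0) := by
  classical
  set K : Matrix (Fin n) (Fin n) ℝ := (-A)⁻¹ with hK
  have hKnn : ∀ i j, 0 ≤ K i j := DfeAux.neg_inv_entry_nonneg hM hH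
  have hAu : IsUnit (-A) := by
    have := DfeAux.isUnit_smul_one_sub hH (s := 0) le_rfl
    simpa using this
  have hAd : IsUnit (-A).det := (Matrix.isUnit_iff_isUnit_det _).mp hAu
  have hKA : K * A = -1 := by
    have h1 : K * (-A) = 1 := Matrix.nonsing_inv_mul (-A) hAd
    rw [Matrix.mul_neg] at h1
    rw [← neg_neg (K * A), h1]
  set BI : Fin m → ℝ := B.mulVec I with hBI
  set Q : ℝ := ∑ j, μS j * (S j - S₀ j) ^ 2 / S j with hQ
  set p : ℝ := S ⬝ᵥ BI with hp
  set c : ℝ := S₀ ⬝ᵥ BI with hc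
  set Pv : Fin n → ℝ := Matrix.vecMul (Matrix.vecMul S₀ B) K with hPv
  have hPvα : Pv ⬝ᵥ α = R₀ := by
    rw [hR₀, Matrix.dotProduct_mulVec, Matrix.dotProduct_mulVec, hPv]
  have hwI : Matrix.vecMul S B ⬝ᵥ I = p := by
    rw [hp, hBI, Matrix.dotProduct_mulVec]
  have hterm2 : Pv ⬝ᵥ A.mulVec I = -c := by
    rw [Matrix.dotProduct_mulVec, hPv, Matrix.vecMul_vecMul, hKA]
    have : Matrix.vecMul (Matrix.vecMul S₀ B) (-1 : Matrix (Fin n) (Fin n) ℝ)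
        = -(Matrix.vecMul S₀ B) := by
      ext j
      simp [Matrix.vecMul, dotProduct, Matrix.one_apply, mul_ite,
        Finset.sum_ite_eq', Finset.mul_sum, Finset.sum_mul]
    rw [this, neg_dotProduct, hc, hBI, Matrix.dotProduct_mulVec]
  have hterm1 : (Matrix.vecMulVec α (Matrix.vecMul S B)).mulVec I
      = (Matrix.vecMul S B ⬝ᵥ I) • α := by
    ext i
    simp [Matrix.mulVec, Matrix.vecMulVec_apply, dotProduct, Finset.mul_sum,
      Finset.sum_mul, mul_comm, mul_left_comm]
  have hPvI : Pv ⬝ᵥ Idot = R₀ * p - c := by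
    rw [hIdot, Matrix.add_mulVec, dotProduct_add, hterm1, dotProduct_smul,
      hwI, hterm2, hPvα, smul_eq_mul]
    ring
  have hsum : (∑ j, Sdot j) - ∑ j, S₀ j * Sdot j / S j = -Q - p + c := by
    rw [← Finset.sum_sub_distrib]
    have hj : ∀ j : Fin m, Sdot j - S₀ j * Sdot j / S j
        = -(μS j * (S j - S₀ j) ^ 2 / S j) - S j * BI j + S₀ j * BI j := by
      intro j
      rw [hSdot]
      have := (hS j).ne'
      field_simp
      ring
    rw [Finset.sum_congr rfl fun j _ => hj j]
    rw [Finset.sum_add_distrib, Finset.sum_sub_distrib]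
    simp only [hQ, hp, hc, dotProduct, Finset.sum_neg_distrib]
  have hmain : Vdot = -R₀ * Q + (R₀ - 1) * c := by
    rw [hVdot, hsum]
    have : Matrix.vecMul (Matrix.vecMul S₀ B) (-A)⁻¹ ⬝ᵥ Idot = R₀ * p - c := hPvI
    rw [this]
    ring
  refine ⟨hmain, fun hR1 => ?_⟩
  have hQnn : 0 ≤ Q := Finset.sum_nonneg fun j _ =>
    div_nonneg (mul_nonneg (hμ j).le (sq_nonneg _)) (hS j).le
  have hBInn : ∀ j, 0 ≤ BI j := by
    intro j
    rw [hBI]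
    simp only [Matrix.mulVec, dotProduct]
    exact Finset.sum_nonneg fun i _ => mul_nonneg (hB j i) (hI i)
  have hcnn : 0 ≤ c := Finset.sum_nonneg fun j _ => mul_nonneg (hS₀ j).le (hBInn j)
  have hR₀nn : 0 ≤ R₀ := by
    rw [hR₀]
    have hx : ∀ i, 0 ≤ (-A)⁻¹.mulVec α i := by
      intro i
      simp only [Matrix.mulVec, dotProduct]
      exact Finset.sum_nonneg fun k _ => mul_nonneg (hKnn i k) (hα k)
    have hy : ∀ j, 0 ≤ B.mulVec ((-A)⁻¹.mulVec α) j := by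
      intro j
      simp only [Matrix.mulVec, dotProduct]
      exact Finset.sum_nonneg fun i _ => mul_nonneg (hB j i) (hx i)
    simp only [dotProduct]
    exact Finset.sum_nonneg fun j _ => mul_nonneg (hS₀ j).le (hy j)
  rw [hmain]
  have h1 : -R₀ * Q ≤ 0 := by nlinarith
  have h2 : (R₀ - 1) * c ≤ 0 := mul_nonpos_of_nonpos_of_nonneg (by linarith) hcnn
  linarith
end
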